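/- arXiv:1611.07658 — 5 statements merged into one kernel-verified Lean document; each statement's English description precedes it below -/
import Mathlib

section
/- Fix an integer N ≥ 0 and define, for x = (x₁,x₂) ∈ (0,1)², f(x) = x₁ + (1−x₁)(1−(1−x₂)^N), a₁(x) = x₂ + (1−x₂)f(x), and a₂(x) = x₂ + (1−x₂)f(x)³. Then the map x ↦ (a₁(x), a₂(x)) is injective on (0,1)²: if x ≠ x′ then (a₁(x), a₂(x)) ≠ (a₁(x′), a₂(x′)). -/
/-!
Write `f` for the inner function and `s = x₂`. Since `1 - a₁ = (1 - s)(1 - f)` and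
`1 - a₂ = (1 - s)(1 - f)(1 + f + f²)`, the quotient of the two determines `1 + f + f²`, hence `f`
(as `f ≥ 0`), and then `1 - s`. Finally `f = 1 - (1 - x₁)(1 - x₂)^N` is strictly monotone in `x₁`.
-/

lemma add_sub_mul_one_sub_mem_Ico {a q : ℝ} (ha₀ : 0 ≤ a) (ha₁ : a < 1) (hq₀ : 0 < q)
    (hq₁ : q ≤ 1) : a + (1 - a) * (1 - q) ∈ Set.Ico 0 1 := by
  constructor <;> nlinarith

lemma add_sub_mul_one_sub_injective {q : ℝ} (hq : q ≠ 0) :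
    Function.Injective fun a : ℝ => a + (1 - a) * (1 - q) := by
  intro a a' h
  have hdiff : (a - a') * q = 0 := by linear_combination h
  simpa [hq, sub_eq_zero] using hdiff

lemma eq_and_eq_of_add_sub_mul_eq_of_add_sub_mul_cube_eq {s s' f f' : ℝ} (hs : s < 1)
    (hf : f < 1) (hf₀ : 0 ≤ f) (hf₀' : 0 ≤ f')
    (h₁ : s + (1 - s) * f = s' + (1 - s') * f')
    (h₃ : s + (1 - s) * f ^ 3 = s' + (1 - s') * f' ^ 3) : s = s' ∧ f = f' := by
  have hgap : (1 - s) * (1 - f) = (1 - s') * (1 - f') := by linear_combination -h₁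
  have hgap_pos : 0 < (1 - s') * (1 - f') := hgap ▸ mul_pos (by linarith) (by linarith)
  have hquot : 1 + f + f ^ 2 = 1 + f' + f' ^ 2 := by
    refine mul_left_cancel₀ hgap_pos.ne' ?_
    linear_combination (-(1 + f + f ^ 2)) * hgap - h₃
  have hff' : f = f' := by
    have : (f - f') * (1 + f + f') = 0 := by linear_combination hquot
    rcases mul_eq_zero.1 this with h | h <;> linarith
  subst hff'
  refine ⟨?_, rfl⟩
  have := mul_right_cancel₀ (by linarith : 1 - f ≠ 0) hgap
  linarith

/-- Fix an integer `N ≥ 0`. For `x = (x₁, x₂) ∈ (0,1)²` define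
`f x = x₁ + (1 - x₁) * (1 - (1 - x₂) ^ N)`, `a₁ x = x₂ + (1 - x₂) * f x`,
`a₂ x = x₂ + (1 - x₂) * (f x)³`. Then `x ↦ (a₁ x, a₂ x)` is injective on `(0,1)²`. -/
theorem stmt0 (N : ℕ) (x x' : ℝ × ℝ)
    (hx : x ∈ Set.Ioo (0 : ℝ) 1 ×ˢ Set.Ioo (0 : ℝ) 1)
    (hx' : x' ∈ Set.Ioo (0 : ℝ) 1 ×ˢ Set.Ioo (0 : ℝ) 1)
    (hne : x ≠ x') :
    (x.2 + (1 - x.2) * (x.1 + (1 - x.1) * (1 - (1 - x.2) ^ N)),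
      x.2 + (1 - x.2) * (x.1 + (1 - x.1) * (1 - (1 - x.2) ^ N)) ^ 3) ≠
    (x'.2 + (1 - x'.2) * (x'.1 + (1 - x'.1) * (1 - (1 - x'.2) ^ N)),
      x'.2 + (1 - x'.2) * (x'.1 + (1 - x'.1) * (1 - (1 - x'.2) ^ N)) ^ 3) := by
  obtain ⟨⟨hx₁₀, hx₁₁⟩, hx₂₀, hx₂₁⟩ := hx
  obtain ⟨⟨hx₁₀', hx₁₁'⟩, hx₂₀', hx₂₁'⟩ := hx'
  have hf := add_sub_mul_one_sub_mem_Ico hx₁₀.le hx₁₁ (pow_pos (sub_pos.2 hx₂₁) N)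
    (pow_le_one₀ (by linarith) (by linarith))
  have hf' := add_sub_mul_one_sub_mem_Ico hx₁₀'.le hx₁₁' (pow_pos (sub_pos.2 hx₂₁') N)
    (pow_le_one₀ (by linarith) (by linarith))
  intro h
  obtain ⟨hx₂, hfx⟩ := eq_and_eq_of_add_sub_mul_eq_of_add_sub_mul_cube_eq hx₂₁ hf.2 hf.1 hf'.1
    (congrArg Prod.fst h) (congrArg Prod.snd h)
  rw [hx₂] at hfx
  exact hne (Prod.ext (add_sub_mul_one_sub_injective (pow_pos (sub_pos.2 hx₂₁') N).ne' hfx) hx₂)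
end

section
/- Let n ≥ 3 and consider the links-and-triangles SUGM on n nodes with parameters (β_L, β_T) ∈ (0,1)². Let S_L(g) = (Σ_{i<j} g_ij)/C(n,2) be the fraction of pairs that are linked and S_T(g) = (Σ_{i<j<k} g_ij g_jk g_ik)/C(n,3) the fraction of triples forming triangles. Then the map (β_L, β_T) ↦ (E_{β_L,β_T}[S_L(g)], E_{β_L,β_T}[S_T(g)]) is injective on (0,1)²: if (β_L′, β_T′) ≠ (β_L, β_T) then the corresponding pairs of expectations differ. -/
/-!
Under the SUGM the pair and triple coordinates are independent Bernoulli variables. A pair is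
unlinked iff its direct link and all `n - 2` triangles through it failed, so it is linked with
probability `1 - (1 - βL) (1 - βT)^(n-2)`. A triple is a triangle of the observed graph iff its own
triangle formed or each of its three edges is produced by its direct link or a triangle through a
fourth vertex; these three sources are disjoint sets of coordinates, so the probability is
`βT + (1 - βT) (1 - (1 - βL) (1 - βT)^(n-3))^3`. The expectations of `S_L` and `S_T` are fixed
positive multiples of these two probabilities, and the probabilities determine `(βL, βT)`: with
`x = (1 - βL) (1 - βT)^(n-3)` and `t = 1 - βT` the first fixes `x t`, and then the second is
strictly monotone in `x`.
-/

open MeasureTheory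

/-- A Bernoulli measure on `Bool` with success probability `p`. -/
noncomputable def bern (p : ℝ) : Measure Bool :=
  ENNReal.ofReal p • Measure.dirac true + ENNReal.ofReal (1 - p) • Measure.dirac false

/-- The links-and-triangles SUGM on `n` nodes: independently, every pair of nodes forms a
direct link with probability `βL`, and every triple of nodes forms a triangle with
probability `βT`. -/
noncomputable def sugm (n : ℕ) (βL βT : ℝ) : Measure (Finset (Fin n) → Bool) :=
  Measure.pi fun s => if s.card = 2 then bern βL else if s.card = 3 then bern βT else bern 0

/-- The observed graph: `i` and `j` are linked iff the direct link `{i, j}` formed or some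
triangle `{i, j, k}` formed. -/
def edgeObs {n : ℕ} (ω : Finset (Fin n) → Bool) (i j : Fin n) : Bool :=
  ω {i, j} || decide (∃ k : Fin n, k ≠ i ∧ k ≠ j ∧ ω {i, j, k} = true)

/-- `S_L(g)`: the fraction of pairs of nodes that are linked in the observed graph. -/
noncomputable def SLfrac (n : ℕ) (ω : Finset (Fin n) → Bool) : ℝ :=
  (∑ i : Fin n, ∑ j : Fin n, if i < j ∧ edgeObs ω i j = true then (1 : ℝ) else 0) /
    (n.choose 2)

/-- `S_T(g)`: the fraction of triples of nodes forming triangles in the observed graph. -/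
noncomputable def STfrac (n : ℕ) (ω : Finset (Fin n) → Bool) : ℝ :=
  (∑ i : Fin n, ∑ j : Fin n, ∑ k : Fin n,
      if i < j ∧ j < k ∧ edgeObs ω i j = true ∧ edgeObs ω j k = true ∧ edgeObs ω i k = true
      then (1 : ℝ) else 0) / (n.choose 3)

open Finset

lemma isProbabilityMeasure_bern {p : ℝ} (hp : p ∈ Set.Icc 0 1) :
    IsProbabilityMeasure (bern p) := by
  constructor
  simp [bern, ← ENNReal.ofReal_add hp.1 (sub_nonneg.2 hp.2)]

lemma integral_bern {p : ℝ} (hp : p ∈ Set.Icc 0 1) (f : Bool → ℝ) :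
    ∫ b, f b ∂bern p = p * f true + (1 - p) * f false := by
  have := isProbabilityMeasure_bern hp
  rw [integral_fintype .of_finite]
  simp [bern, measureReal_def, hp.1, hp.2]

section BernoulliProduct

variable {ι : Type*} {p : ι → ℝ}

def offIndicator (T : Finset ι) (ω : ι → Bool) : ℝ := ∏ s ∈ T, if ω s = false then 1 else 0

lemma offIndicator_eq_ite (T : Finset ι) (ω : ι → Bool) :
    offIndicator T ω = if ∀ s ∈ T, ω s = false then 1 else 0 :=
  prod_boole

variable [Fintype ι]

noncomputable def bernPi (p : ι → ℝ) : Measure (ι → Bool) := Measure.pi fun s => bern (p s)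

lemma isProbabilityMeasure_bernPi (hp : ∀ s, p s ∈ Set.Icc 0 1) :
    IsProbabilityMeasure (bernPi p) :=
  have := fun s => isProbabilityMeasure_bern (hp s)
  inferInstanceAs (IsProbabilityMeasure (Measure.pi _))

lemma integral_bernPi_prod (hp : ∀ s, p s ∈ Set.Icc 0 1) (g : ι → Bool → ℝ) :
    ∫ ω, ∏ s, g s (ω s) ∂bernPi p = ∏ s, (p s * g s true + (1 - p s) * g s false) := by
  have := fun s => isProbabilityMeasure_bern (hp s)
  rw [bernPi, integral_fintype_prod_eq_prod]
  exact prod_congr rfl fun s _ => integral_bern (hp s) _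

lemma integral_offIndicator (hp : ∀ s, p s ∈ Set.Icc 0 1) (T : Finset ι) :
    ∫ ω, offIndicator T ω ∂bernPi p = ∏ s ∈ T, (1 - p s) := by
  classical
  calc ∫ ω, offIndicator T ω ∂bernPi p
      = ∫ ω, ∏ s, (if s ∈ T then (if ω s = false then 1 else 0) else 1) ∂bernPi p := by
        simp_rw [offIndicator, Fintype.prod_ite_mem]
    _ = ∏ s, (if s ∈ T then 1 - p s else 1) := by
        rw [integral_bernPi_prod hp fun s b => if s ∈ T then (if b = false then 1 else 0) else 1]
        exact prod_congr rfl fun s _ => by by_cases hs : s ∈ T <;> simp [hs]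
    _ = ∏ s ∈ T, (1 - p s) := Fintype.prod_ite_mem T _

/-- Expanding the product by inclusion–exclusion turns every term into a single off-indicator,
whose expectation factorises over the disjoint blocks. -/
lemma integral_offIndicator_mul_prod_one_sub {κ : Type*} (hp : ∀ s, p s ∈ Set.Icc 0 1)
    (T₀ : Finset ι) {K : Finset κ} {T : κ → Finset ι} (hT : (K : Set κ).PairwiseDisjoint T)
    (hT₀ : ∀ k ∈ K, Disjoint T₀ (T k)) :
    ∫ ω, offIndicator T₀ ω * ∏ k ∈ K, (1 - offIndicator (T k) ω) ∂bernPi p =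
      (∏ s ∈ T₀, (1 - p s)) * ∏ k ∈ K, (1 - ∏ s ∈ T k, (1 - p s)) := by
  classical
  have := isProbabilityMeasure_bernPi hp
  have hdisj : ∀ J ∈ K.powerset, Disjoint T₀ (J.biUnion T) := fun J hJ =>
    (disjoint_biUnion_right _ _ _).2 fun k hk => hT₀ k (mem_powerset.1 hJ hk)
  have hsub : ∀ J ∈ K.powerset, (J : Set κ).PairwiseDisjoint T := fun J hJ =>
    hT.subset (by simpa using mem_powerset.1 hJ)
  have expand : ∀ ω, offIndicator T₀ ω * ∏ k ∈ K, (1 - offIndicator (T k) ω) =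
      ∑ J ∈ K.powerset, (-1) ^ #J * offIndicator (T₀ ∪ J.biUnion T) ω := by
    intro ω
    rw [prod_sub _ _ K, mul_sum]
    refine sum_congr rfl fun J hJ => ?_
    simp only [offIndicator]
    rw [prod_union (hdisj J hJ), prod_biUnion (hsub J hJ), prod_const_one]
    ring
  simp_rw [expand]
  rw [integral_finsetSum _ fun _ _ => .of_finite, prod_sub _ _ K, mul_sum]
  refine sum_congr rfl fun J hJ => ?_
  rw [integral_const_mul, integral_offIndicator hp, prod_union (hdisj J hJ),
    prod_biUnion (hsub J hJ)]
  simp only [prod_const_one]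
  ring

end BernoulliProduct

section Sugm

variable {V : Type*}

def sugmProb (βL βT : ℝ) (s : Finset V) : ℝ :=
  if #s = 2 then βL else if #s = 3 then βT else 0

lemma sugmProb_mem_Icc {βL βT : ℝ} (hL : βL ∈ Set.Icc 0 1) (hT : βT ∈ Set.Icc 0 1)
    (s : Finset V) : sugmProb βL βT s ∈ Set.Icc 0 1 := by
  unfold sugmProb
  split_ifs
  exacts [hL, hT, ⟨le_rfl, zero_le_one⟩]

lemma sugm_eq_bernPi (n : ℕ) (βL βT : ℝ) : sugm n βL βT = bernPi (sugmProb βL βT) := by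
  unfold sugm bernPi sugmProb
  congr! 2 with s
  split_ifs <;> rfl

lemma isProbabilityMeasure_sugm {n : ℕ} {βL βT : ℝ} (hL : βL ∈ Set.Icc 0 1)
    (hT : βT ∈ Set.Icc 0 1) : IsProbabilityMeasure (sugm n βL βT) :=
  sugm_eq_bernPi n βL βT ▸ isProbabilityMeasure_bernPi (sugmProb_mem_Icc hL hT)

end Sugm

section LinkSources

variable {V : Type*}

lemma triangle_pairs_ne [DecidableEq V] {i j k : V} (hij : i ≠ j) (hik : i ≠ k) (hjk : j ≠ k) :
    ({i, j} : Finset V) ≠ {j, k} ∧ ({i, j} : Finset V) ≠ {i, k} ∧ ({j, k} : Finset V) ≠ {i, k} :=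
  ⟨ne_of_mem_of_not_mem' (mem_insert_self i _) (by simp [hij, hik]),
    ne_of_mem_of_not_mem' (by simp) (by simp [hij.symm, hjk] : j ∉ ({i, k} : Finset V)),
    ne_of_mem_of_not_mem' (mem_insert_self j _) (by simp [hij.symm, hjk])⟩

variable [Fintype V] [DecidableEq V]

/-- The coordinates that can produce the link `e`, except the triangles through a further vertex
of `E`. -/
def linkSources (e E : Finset V) : Finset (Finset V) :=
  insert e (Eᶜ.image (insert · e))

lemma inter_eq_of_mem_linkSources {e E s : Finset V} (heE : e ⊆ E) (hs : s ∈ linkSources e E) :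
    s ∩ E = e := by
  simp only [linkSources, mem_insert, mem_image, mem_compl] at hs
  rcases hs with rfl | ⟨l, hl, rfl⟩
  · exact inter_eq_left.2 heE
  · rw [insert_inter_of_notMem hl, inter_eq_left.2 heE]

lemma disjoint_linkSources {e e' E : Finset V} (heE : e ⊆ E) (he'E : e' ⊆ E) (hne : e ≠ e') :
    Disjoint (linkSources e E) (linkSources e' E) :=
  disjoint_left.2 fun _ hs hs' =>
    hne ((inter_eq_of_mem_linkSources heE hs).symm.trans (inter_eq_of_mem_linkSources he'E hs'))

lemma notMem_linkSources {e E : Finset V} (heE : e ⊆ E) (hne : e ≠ E) : E ∉ linkSources e E :=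
  fun h => hne ((inter_eq_of_mem_linkSources heE h).symm.trans (inter_self E))

lemma prod_linkSources (βL βT : ℝ) {e E : Finset V} (he : #e = 2) (heE : e ⊆ E) :
    ∏ s ∈ linkSources e E, (1 - sugmProb βL βT s) =
      (1 - βL) * (1 - βT) ^ (Fintype.card V - #E) := by
  have hnot : ∀ l ∈ Eᶜ, l ∉ e := fun l hl hle => mem_compl.1 hl (heE hle)
  have hinj : Set.InjOn (insert · e) (Eᶜ : Finset V) := fun l hl l' hl' h => by
    have : l ∈ insert l' e := by
      rw [← show insert l e = insert l' e from h]
      exact mem_insert_self l e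
    simpa [hnot l hl] using this
  have hcard : ∀ l ∈ Eᶜ, #(insert l e) = 3 := fun l hl => by
    rw [card_insert_of_notMem (hnot l hl), he]
  have he_notMem : e ∉ Eᶜ.image (insert · e) := by
    simp only [mem_image, not_exists, not_and]
    intro l hl h
    simpa [he] using (congrArg card h).symm.trans (hcard l hl)
  rw [linkSources, prod_insert he_notMem, prod_image hinj,
    prod_congr rfl fun l hl => show 1 - sugmProb βL βT (insert l e) = 1 - βT by
      simp [sugmProb, hcard l hl], prod_const, card_compl,
    sugmProb, if_pos he]

end LinkSources

section Observed

variable {n : ℕ} {ω : Finset (Fin n) → Bool}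

lemma edgeObs_eq_true_iff {i j : Fin n} {E : Finset (Fin n)} (hi : i ∈ E) (hj : j ∈ E)
    (hE : ∀ l ∈ E, l ≠ i → l ≠ j → ω {i, j, l} = false) :
    edgeObs ω i j = true ↔ ∃ s ∈ linkSources {i, j} E, ω s = true := by
  have htriple : ∀ l, ({i, j, l} : Finset (Fin n)) = insert l {i, j} := fun l => by
    ext; simp only [mem_insert, mem_singleton]; tauto
  simp only [edgeObs, Bool.or_eq_true, decide_eq_true_eq, linkSources, exists_mem_insert,
    exists_mem_image, mem_compl, ← htriple]
  refine or_congr_right ⟨fun ⟨l, hli, hlj, hl⟩ => ⟨l, fun hlE => ?_, hl⟩,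
    fun ⟨l, hlE, hl⟩ => ⟨l, fun h => hlE (h ▸ hi), fun h => hlE (h ▸ hj), hl⟩⟩
  simp [hE l hlE hli hlj] at hl

lemma ite_edgeObs_eq {i j : Fin n} {E : Finset (Fin n)} (hi : i ∈ E) (hj : j ∈ E)
    (hE : ∀ l ∈ E, l ≠ i → l ≠ j → ω {i, j, l} = false) :
    (if edgeObs ω i j = true then (1 : ℝ) else 0) =
      1 - offIndicator (linkSources {i, j} E) ω := by
  simp only [offIndicator_eq_ite, edgeObs_eq_true_iff hi hj hE]
  by_cases h : ∃ s ∈ linkSources {i, j} E, ω s = true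
  · obtain ⟨s, hs, hωs⟩ := h
    rw [if_pos ⟨s, hs, hωs⟩, if_neg fun hall => by simp [hall s hs] at hωs, sub_zero]
  · simp_all

lemma edgeObs_eq_true_of_triangle {i j k : Fin n} (hki : k ≠ i) (hkj : k ≠ j)
    (h : ω {i, j, k} = true) : edgeObs ω i j = true := by
  simpa [edgeObs] using Or.inr ⟨k, hki, hkj, h⟩

lemma ite_triangle_eq {i j k : Fin n} (hij : i ≠ j) (hik : i ≠ k) (hjk : j ≠ k) :
    (if edgeObs ω i j = true ∧ edgeObs ω j k = true ∧ edgeObs ω i k = true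
      then (1 : ℝ) else 0) =
      (1 - offIndicator {{i, j, k}} ω) + offIndicator {{i, j, k}} ω *
        ∏ e ∈ ({{i, j}, {j, k}, {i, k}} : Finset (Finset (Fin n))),
          (1 - offIndicator (linkSources e {i, j, k}) ω) := by
  have hjki : ({j, k, i} : Finset (Fin n)) = {i, j, k} := by
    ext; simp only [mem_insert, mem_singleton]; tauto
  have hikj : ({i, k, j} : Finset (Fin n)) = {i, j, k} := by
    ext; simp only [mem_insert, mem_singleton]; tauto
  cases ht : ω {i, j, k}
  · obtain ⟨hne₁, hne₂, hne₃⟩ := triangle_pairs_ne hij hik hjk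
    rw [prod_insert (by simp [hne₁, hne₂]), prod_insert (by simp [hne₃]), prod_singleton,
      ← ite_edgeObs_eq (by simp) (by simp) ?_, ← ite_edgeObs_eq (by simp) (by simp) ?_,
      ← ite_edgeObs_eq (by simp) (by simp) ?_]
    · simp only [offIndicator, prod_singleton, ht, if_true, sub_self, zero_add, one_mul]
      split_ifs <;> simp_all
    all_goals
      simp only [mem_insert, mem_singleton]
      rintro l (rfl | rfl | rfl) h₁ h₂ <;> simp_all
  · rw [if_pos ⟨edgeObs_eq_true_of_triangle hik.symm hjk.symm ht,
      edgeObs_eq_true_of_triangle hij hik (hjki ▸ ht),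
      edgeObs_eq_true_of_triangle hij.symm hjk (hikj ▸ ht)⟩]
    simp [offIndicator, ht]

end Observed

section Expectations

variable {n : ℕ} {βL βT : ℝ}

def edgeProb (n : ℕ) (βL βT : ℝ) : ℝ := 1 - (1 - βL) * (1 - βT) ^ (n - 2)

def triangleProb (n : ℕ) (βL βT : ℝ) : ℝ :=
  βT + (1 - βT) * (1 - (1 - βL) * (1 - βT) ^ (n - 3)) ^ 3

lemma integral_ite_edgeObs (hL : βL ∈ Set.Icc 0 1) (hT : βT ∈ Set.Icc 0 1) {i j : Fin n}
    (hij : i ≠ j) :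
    ∫ ω, (if edgeObs ω i j = true then (1 : ℝ) else 0) ∂sugm n βL βT = edgeProb n βL βT := by
  have hp : ∀ s : Finset (Fin n), _ := sugmProb_mem_Icc hL hT
  have := isProbabilityMeasure_bernPi hp
  have hE : ∀ (ω : Finset (Fin n) → Bool), ∀ l ∈ ({i, j} : Finset (Fin n)),
      l ≠ i → l ≠ j → ω {i, j, l} = false := by
    simp only [mem_insert, mem_singleton]
    rintro ω l (rfl | rfl) h₁ h₂ <;> contradiction
  simp_rw [ite_edgeObs_eq (by simp) (by simp) (hE _)]
  rw [sugm_eq_bernPi, integral_sub (integrable_const 1) .of_finite, integral_const,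
    integral_offIndicator hp, prod_linkSources βL βT (card_pair hij) subset_rfl, card_pair hij,
    Fintype.card_fin]
  simp [edgeProb]

lemma integral_ite_triangle (hL : βL ∈ Set.Icc 0 1) (hT : βT ∈ Set.Icc 0 1) {i j k : Fin n}
    (hij : i ≠ j) (hik : i ≠ k) (hjk : j ≠ k) :
    ∫ ω, (if edgeObs ω i j = true ∧ edgeObs ω j k = true ∧ edgeObs ω i k = true
      then (1 : ℝ) else 0) ∂sugm n βL βT = triangleProb n βL βT := by
  have hp : ∀ s : Finset (Fin n), _ := sugmProb_mem_Icc hL hT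
  have := isProbabilityMeasure_bernPi hp
  set E : Finset (Fin n) := {i, j, k}
  set K : Finset (Finset (Fin n)) := {{i, j}, {j, k}, {i, k}}
  have hE : #E = 3 := card_eq_three.2 ⟨i, j, k, hij, hik, hjk, rfl⟩
  have hK : ∀ e ∈ K, #e = 2 ∧ e ⊆ E := by
    simp only [K, E, mem_insert, mem_singleton]
    rintro e (rfl | rfl | rfl) <;> refine ⟨card_pair ‹_›, fun x => ?_⟩ <;>
      simp only [mem_insert, mem_singleton] <;> tauto
  have hpairs : ∏ e ∈ K, (1 - ∏ s ∈ linkSources e E, (1 - sugmProb βL βT s)) =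
      (1 - (1 - βL) * (1 - βT) ^ (n - 3)) ^ 3 := by
    obtain ⟨hne₁, hne₂, hne₃⟩ := triangle_pairs_ne hij hik hjk
    rw [prod_congr rfl fun e he => by rw [prod_linkSources βL βT (hK e he).1 (hK e he).2],
      prod_const, card_eq_three.2 ⟨_, _, _, hne₁, hne₂, hne₃, rfl⟩, hE, Fintype.card_fin]
  have hdisj : (K : Set (Finset (Fin n))).PairwiseDisjoint (linkSources · E) :=
    fun e he e' he' hne => disjoint_linkSources (hK e he).2 (hK e' he').2 hne
  have hE_disj : ∀ e ∈ K, Disjoint {E} (linkSources e E) := fun e he =>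
    disjoint_singleton_left.2 <| notMem_linkSources (hK e he).2 fun h => by
      simpa [h, hE] using (hK e he).1
  simp_rw [ite_triangle_eq hij hik hjk]
  rw [sugm_eq_bernPi, integral_add .of_finite .of_finite,
    integral_sub (integrable_const 1) .of_finite, integral_const, integral_offIndicator hp,
    integral_offIndicator_mul_prod_one_sub hp _ hdisj hE_disj, hpairs, prod_singleton, sugmProb,
    if_neg (by rw [hE]; decide), if_pos hE]
  simp [triangleProb]

lemma integral_SLfrac (hL : βL ∈ Set.Icc 0 1) (hT : βT ∈ Set.Icc 0 1) :
    ∫ ω, SLfrac n ω ∂sugm n βL βT =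
      (∑ i : Fin n, ∑ j : Fin n, if i < j then (1 : ℝ) else 0) / n.choose 2 *
        edgeProb n βL βT := by
  have := isProbabilityMeasure_sugm (n := n) hL hT
  simp only [SLfrac]
  rw [integral_div, integral_finsetSum _ fun _ _ => .of_finite, div_mul_eq_mul_div, sum_mul]
  congr 1
  refine sum_congr rfl fun i _ => ?_
  rw [integral_finsetSum _ fun _ _ => .of_finite, sum_mul]
  refine sum_congr rfl fun j _ => ?_
  by_cases hij : i < j
  · simp [hij, integral_ite_edgeObs hL hT hij.ne]
  · simp [hij]

lemma integral_STfrac (hL : βL ∈ Set.Icc 0 1) (hT : βT ∈ Set.Icc 0 1) :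
    ∫ ω, STfrac n ω ∂sugm n βL βT =
      (∑ i : Fin n, ∑ j : Fin n, ∑ k : Fin n, if i < j ∧ j < k then (1 : ℝ) else 0) /
        n.choose 3 * triangleProb n βL βT := by
  have := isProbabilityMeasure_sugm (n := n) hL hT
  simp only [STfrac]
  rw [integral_div, integral_finsetSum _ fun _ _ => .of_finite, div_mul_eq_mul_div, sum_mul]
  congr 1
  refine sum_congr rfl fun i _ => ?_
  rw [integral_finsetSum _ fun _ _ => .of_finite, sum_mul]
  refine sum_congr rfl fun j _ => ?_
  rw [integral_finsetSum _ fun _ _ => .of_finite, sum_mul]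
  refine sum_congr rfl fun k _ => ?_
  by_cases hijk : i < j ∧ j < k
  · simp only [hijk.1, hijk.2, true_and, if_true, one_mul]
    exact integral_ite_triangle hL hT hijk.1.ne (hijk.1.trans hijk.2).ne hijk.2.ne
  · simp [hijk, ← and_assoc]

lemma sum_ite_lt_pos (hn : 2 ≤ n) :
    0 < ∑ i : Fin n, ∑ j : Fin n, if i < j then (1 : ℝ) else 0 :=
  sum_pos' (fun _ _ => by positivity) ⟨⟨0, by omega⟩, mem_univ _,
    sum_pos' (fun _ _ => by positivity) ⟨⟨1, by omega⟩, mem_univ _, by simp [Fin.lt_def]⟩⟩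

lemma sum_ite_lt_lt_pos (hn : 3 ≤ n) :
    0 < ∑ i : Fin n, ∑ j : Fin n, ∑ k : Fin n, if i < j ∧ j < k then (1 : ℝ) else 0 :=
  sum_pos' (fun _ _ => by positivity) ⟨⟨0, by omega⟩, mem_univ _,
    sum_pos' (fun _ _ => by positivity) ⟨⟨1, by omega⟩, mem_univ _,
      sum_pos' (fun _ _ => by positivity) ⟨⟨2, by omega⟩, mem_univ _, by simp [Fin.lt_def]⟩⟩⟩

lemma eq_of_mul_eq_of_cubic_eq {x t x' t' : ℝ} (hx : 0 < x) (hx1 : x ≤ 1) (hx1' : x' ≤ 1)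
    (ht : 0 < t) (hmul : x' * t' = x * t)
    (hcubic : 1 - t' + t' * (1 - x') ^ 3 = 1 - t + t * (1 - x) ^ 3) : x' = x ∧ t' = t := by
  have hfactor : (x' - x) * (t * x * (3 - x' - x)) = 0 := by
    linear_combination hcubic + (3 - 3 * x' + x' ^ 2) * hmul
  have hxx : x' = x := by
    rcases mul_eq_zero.1 hfactor with h | h
    · linarith
    · nlinarith [mul_pos ht hx]
  subst hxx
  exact ⟨rfl, mul_left_cancel₀ hx.ne' hmul⟩

lemma eq_of_edgeProb_eq_of_triangleProb_eq (hn : 3 ≤ n) {βL' βT' : ℝ}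
    (hL : βL ∈ Set.Ioo 0 1) (hT : βT ∈ Set.Ioo 0 1) (hL' : βL' ∈ Set.Ioo 0 1)
    (hT' : βT' ∈ Set.Ioo 0 1) (hedge : edgeProb n βL' βT' = edgeProb n βL βT)
    (htri : triangleProb n βL' βT' = triangleProb n βL βT) : βL' = βL ∧ βT' = βT := by
  obtain ⟨m, rfl⟩ : ∃ m, n = m + 3 := ⟨n - 3, by omega⟩
  have hpow : ∀ {β : ℝ}, β ∈ Set.Ioo 0 1 → 0 < (1 - β) ^ m ∧ (1 - β) ^ m ≤ 1 := fun hβ =>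
    ⟨pow_pos (by linarith [hβ.2]) m, pow_le_one₀ (by linarith [hβ.2]) (by linarith [hβ.1])⟩
  obtain ⟨hxeq, hteq⟩ := eq_of_mul_eq_of_cubic_eq (x := (1 - βL) * (1 - βT) ^ m)
    (x' := (1 - βL') * (1 - βT') ^ m) (t := 1 - βT) (t' := 1 - βT')
    (mul_pos (by linarith [hL.2]) (hpow hT).1)
    (mul_le_one₀ (by linarith [hL.1]) (hpow hT).1.le (hpow hT).2)
    (mul_le_one₀ (by linarith [hL'.1]) (hpow hT').1.le (hpow hT').2) (by linarith [hT.2])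
    (by simp only [edgeProb, show m + 3 - 2 = m + 1 by omega, pow_succ] at hedge; linarith)
    (by simpa [triangleProb] using htri)
  have hβT : βT' = βT := by linarith
  subst hβT
  exact ⟨by linarith [mul_right_cancel₀ (hpow hT).1.ne' hxeq], rfl⟩

end Expectations

/-- For `n ≥ 3`, the map `(βL, βT) ↦ (E[S_L], E[S_T])` of the
links-and-triangles SUGM is injective on `(0,1)²`. -/
theorem stmt2 (n : ℕ) (hn : 3 ≤ n) (βL βT βL' βT' : ℝ)
    (h : (βL, βT) ∈ Set.Ioo (0 : ℝ) 1 ×ˢ Set.Ioo (0 : ℝ) 1)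
    (h' : (βL', βT') ∈ Set.Ioo (0 : ℝ) 1 ×ˢ Set.Ioo (0 : ℝ) 1)
    (hne : (βL', βT') ≠ (βL, βT)) :
    (∫ ω, SLfrac n ω ∂(sugm n βL' βT'), ∫ ω, STfrac n ω ∂(sugm n βL' βT')) ≠
      (∫ ω, SLfrac n ω ∂(sugm n βL βT), ∫ ω, STfrac n ω ∂(sugm n βL βT)) := by
  obtain ⟨hL, hT⟩ := h
  obtain ⟨hL', hT'⟩ := h'
  intro heq
  obtain ⟨hSL, hST⟩ := Prod.mk.inj heq
  rw [integral_SLfrac (Set.Ioo_subset_Icc_self hL') (Set.Ioo_subset_Icc_self hT'),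
    integral_SLfrac (Set.Ioo_subset_Icc_self hL) (Set.Ioo_subset_Icc_self hT)] at hSL
  rw [integral_STfrac (Set.Ioo_subset_Icc_self hL') (Set.Ioo_subset_Icc_self hT'),
    integral_STfrac (Set.Ioo_subset_Icc_self hL) (Set.Ioo_subset_Icc_self hT)] at hST
  have hpairs := div_pos (sum_ite_lt_pos (by omega : 2 ≤ n))
    (Nat.cast_pos.2 (Nat.choose_pos (by omega : 2 ≤ n)))
  have htriples := div_pos (sum_ite_lt_lt_pos hn) (Nat.cast_pos.2 (Nat.choose_pos hn))
  obtain ⟨rfl, rfl⟩ := eq_of_edgeProb_eq_of_triangleProb_eq hn hL hT hL' hT'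
    (mul_left_cancel₀ hpairs.ne' hSL) (mul_left_cancel₀ htriples.ne' hST)
  exact hne rfl
end

section
/- Let f ∈ (0,1) and set π_L(same) = f² + (1−f)², π_L(diff) = 1 − π_L(same), π_T(same) = f³ + (1−f)³, π_T(diff) = 1 − π_T(same). Let P_L(same), P_L(diff), P_T(same), P_T(diff) be strictly positive reals, and define p_L(s) = P_L(s)²·π_L(s) and p_T(s) = P_T(s)³·π_T(s) for s ∈ {same, diff}. If p_T(diff)/p_T(same) < (p_L(diff)/p_L(same))^{3/2}, then P_T(diff)/P_T(same) < P_L(diff)/P_L(same). -/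
/-!
Write `t = f (1 - f) ∈ (0, 1/4]`. Then `π_L(diff)/π_L(same) = 2t/(1-2t)` and
`π_T(diff)/π_T(same) = 3t/(1-3t)`, and the hypothesis reads
`(PTd/PTs)³ · 3t/(1-3t) < (PLd/PLs)³ · (2t/(1-2t))^(3/2)`.
Since `(2t/(1-2t))³ ≤ (3t/(1-3t))²` on `[0, 1/4]`, the meeting odds of triples dominate the
`3/2`-power of those of pairs, so `(PTd/PTs)³ < (PLd/PLs)³`.
-/

open Real

lemma rpow_three_halves_le_iff {a b : ℝ} (ha : 0 ≤ a) (hb : 0 ≤ b) :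
    a ^ ((3 : ℝ) / 2) ≤ b ↔ a ^ 3 ≤ b ^ 2 := by
  rw [show (3 : ℝ) / 2 = (3 : ℕ) * (1 / 2) by norm_num, rpow_natCast_mul ha, ← sqrt_eq_rpow,
    sqrt_le_left hb]

lemma mul_rpow_three_halves_of_sq {x a : ℝ} (hx : 0 ≤ x) (ha : 0 ≤ a) :
    (x ^ 2 * a) ^ ((3 : ℝ) / 2) = x ^ 3 * a ^ ((3 : ℝ) / 2) := by
  rw [mul_rpow (by positivity) ha, ← rpow_natCast x 2, ← rpow_mul hx, ← rpow_natCast x 3]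
  norm_num

lemma pair_odds_rpow_le_triple_odds {t : ℝ} (ht0 : 0 ≤ t) (ht : t ≤ 1 / 4) :
    (2 * t / (1 - 2 * t)) ^ ((3 : ℝ) / 2) ≤ 3 * t / (1 - 3 * t) := by
  have hL : 0 < 1 - 2 * t := by linarith
  have hT : 0 < 1 - 3 * t := by linarith
  rw [rpow_three_halves_le_iff (by positivity) (by positivity), div_pow, div_pow,
    div_le_div_iff₀ (by positivity) (by positivity)]
  have hpoly : 8 * t * (1 - 3 * t) ^ 2 ≤ 9 * (1 - 2 * t) ^ 3 := by
    -- the difference is `1 + (1 - 4t)(36t² - 30t + 8)`, and the quadratic has no real root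
    nlinarith [mul_nonneg (by linarith : (0 : ℝ) ≤ 1 - 4 * t)
      (by nlinarith [sq_nonneg (6 * t - 5 / 2)] : (0 : ℝ) ≤ 36 * t ^ 2 - 30 * t + 8)]
  nlinarith [mul_le_mul_of_nonneg_left hpoly (sq_nonneg t)]

theorem stmt8_general (f PLs PLd PTs PTd : ℝ) (hf : f ∈ Set.Ioo (0 : ℝ) 1)
    (hPLs : 0 < PLs) (hPLd : 0 < PLd)
    (h : (PTd ^ 3 * (1 - (f ^ 3 + (1 - f) ^ 3))) / (PTs ^ 3 * (f ^ 3 + (1 - f) ^ 3)) <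
        ((PLd ^ 2 * (1 - (f ^ 2 + (1 - f) ^ 2))) / (PLs ^ 2 * (f ^ 2 + (1 - f) ^ 2))) ^
          ((3 : ℝ) / 2)) :
    PTd / PTs < PLd / PLs := by
  obtain ⟨hf0, hf1⟩ := hf
  set t := f * (1 - f)
  have ht0 : 0 < t := mul_pos hf0 (by linarith)
  have ht : t ≤ 1 / 4 := by nlinarith [sq_nonneg (2 * f - 1)]
  have hx : 0 ≤ PLd / PLs := div_nonneg hPLd.le hPLs.le
  have hT : 0 < 3 * t / (1 - 3 * t) := div_pos (by linarith) (by linarith)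
  rw [show 1 - (f ^ 3 + (1 - f) ^ 3) = 3 * t by ring, show f ^ 3 + (1 - f) ^ 3 = 1 - 3 * t by ring,
    show 1 - (f ^ 2 + (1 - f) ^ 2) = 2 * t by ring, show f ^ 2 + (1 - f) ^ 2 = 1 - 2 * t by ring,
    mul_div_mul_comm, mul_div_mul_comm, ← div_pow, ← div_pow,
    mul_rpow_three_halves_of_sq hx (div_nonneg (by linarith) (by linarith))] at h
  have hcube :
      (PTd / PTs) ^ 3 * (3 * t / (1 - 3 * t)) < (PLd / PLs) ^ 3 * (3 * t / (1 - 3 * t)) :=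
    h.trans_le <|
      mul_le_mul_of_nonneg_left (pair_odds_rpow_le_triple_odds ht0.le ht) (pow_nonneg hx 3)
  exact (Odd.pow_lt_pow (by decide)).mp (lt_of_mul_lt_mul_right hcube hT.le)

/-- Let `f ∈ (0,1)`, `π_L(same) = f² + (1-f)²`, `π_L(diff) = 1 - π_L(same)`,
`π_T(same) = f³ + (1-f)³`, `π_T(diff) = 1 - π_T(same)`; let `PLs, PLd, PTs, PTd > 0` and
set `p_L(s) = P_L(s)² π_L(s)`, `p_T(s) = P_T(s)³ π_T(s)`.  If
`p_T(diff)/p_T(same) < (p_L(diff)/p_L(same))^(3/2)` then `PTd/PTs < PLd/PLs`. -/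
theorem stmt8 (f PLs PLd PTs PTd : ℝ) (hf : f ∈ Set.Ioo (0 : ℝ) 1)
    (hPLs : 0 < PLs) (hPLd : 0 < PLd) (hPTs : 0 < PTs) (hPTd : 0 < PTd)
    (h : (PTd ^ 3 * (1 - (f ^ 3 + (1 - f) ^ 3))) / (PTs ^ 3 * (f ^ 3 + (1 - f) ^ 3)) <
        ((PLd ^ 2 * (1 - (f ^ 2 + (1 - f) ^ 2))) / (PLs ^ 2 * (f ^ 2 + (1 - f) ^ 2))) ^
          ((3 : ℝ) / 2)) :
    PTd / PTs < PLd / PLs :=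
  stmt8_general f PLs PLd PTs PTd hf hPLs hPLd h
end

section
/- Identification of a links and Z-stars model: fix integers n > Z ≥ 2 and 0 < d < Z. For β = (β_L, β_Z) ∈ [0,1)² define π(β) = β_L + (1−β_L)(1−(1−β_Z)^{C(n−2,Z−1)}), q_L(β) = β_L + (1−β_L)(1−(1−β_Z)^{2·C(n−2,Z−1)}), and for each integer m ≥ 0, q_m(β) = C(n−1,m)·π(β)^m·(1−π(β))^{n−1−m}·(1−β_Z)^{C(n−1,Z)}. Then the map β ↦ (q_L(β), q_d(β)/q_{d−1}(β)) is injective on [0,1)², with the convention 0/0 = 0 for the ratio. -/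
/-- The probability that a given edge incident to a node forms other than through a star
centered at that node, in the links and `Z`-stars model. -/
noncomputable def piStar (n Z : ℕ) (β : ℝ × ℝ) : ℝ :=
  β.1 + (1 - β.1) * (1 - (1 - β.2) ^ ((n - 2).choose (Z - 1)))

/-- The probability that a given link is present in the links and `Z`-stars model. -/
noncomputable def qLStar (n Z : ℕ) (β : ℝ × ℝ) : ℝ :=
  β.1 + (1 - β.1) * (1 - (1 - β.2) ^ (2 * (n - 2).choose (Z - 1)))

/-- The probability that a given node has degree exactly `m < Z` in the links and
`Z`-stars model. -/
noncomputable def qDeg (n Z m : ℕ) (β : ℝ × ℝ) : ℝ :=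
  ((n - 1).choose m : ℝ) * piStar n Z β ^ m * (1 - piStar n Z β) ^ (n - 1 - m) *
    (1 - β.2) ^ ((n - 1).choose Z)

/-!
With `x = 1 - β_L`, `y = (1 - β_Z)^C(n-2,Z-1)` we have `1 - π = x y` and `1 - q_L = x y²`.
The degree ratio is a binomial ratio, `q_d / q_{d-1} = C(n-1,d) / C(n-1,d-1) · π / (1 - π)`,
and `t ↦ t / (1 - t)` is injective, so the ratio determines `π`, hence `x y`; together with
`x y²` this pins down `x` and `y`, and therefore `β`.
-/

section Field

variable {K : Type*} [Field K]

def binomialTerm (N m : ℕ) (p : K) : K :=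
  (N.choose m : K) * p ^ m * (1 - p) ^ (N - m)

lemma binomialTerm_succ_div [CharZero K] (N m : ℕ) (hm : m < N) {p : K} (hp : p ≠ 1) :
    binomialTerm N (m + 1) p / binomialTerm N m p =
      (N.choose (m + 1) : K) / N.choose m * (p / (1 - p)) := by
  have hq : 1 - p ≠ 0 := sub_ne_zero.mpr hp.symm
  have hC : (N.choose m : K) ≠ 0 := by exact_mod_cast (Nat.choose_pos hm.le).ne'
  have hexp : N - m = N - (m + 1) + 1 := by omega
  rcases eq_or_ne p 0 with rfl | hp0
  · simp [binomialTerm]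
  · unfold binomialTerm
    rw [hexp, pow_succ, pow_succ]
    field_simp

lemma div_one_sub_injOn : Set.InjOn (fun t : K => t / (1 - t)) {t | t ≠ 1} := by
  intro a ha b hb h
  have ha' : 1 - a ≠ 0 := sub_ne_zero.mpr (Ne.symm ha)
  have hb' : 1 - b ≠ 0 := sub_ne_zero.mpr (Ne.symm hb)
  rw [div_eq_div_iff ha' hb'] at h
  linear_combination h

lemma eq_and_eq_of_mul_eq_of_mul_sq_eq {x y x' y' : K} (h₁ : x * y = x' * y')
    (h₂ : x * y ^ 2 = x' * y' ^ 2) (hxy : x * y ≠ 0) : x = x' ∧ y = y' := by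
  have hy : y = y' := by
    have h : x * y * y = x * y * y' := by linear_combination h₂ - y' * h₁
    exact mul_left_cancel₀ hxy h
  subst hy
  exact ⟨mul_right_cancel₀ (right_ne_zero_of_mul hxy) h₁, rfl⟩

end Field

section LinksAndStars

variable (n Z : ℕ) (β : ℝ × ℝ)

lemma one_sub_piStar :
    1 - piStar n Z β = (1 - β.1) * (1 - β.2) ^ (n - 2).choose (Z - 1) := by
  unfold piStar; ring

lemma one_sub_qLStar :
    1 - qLStar n Z β = (1 - β.1) * ((1 - β.2) ^ (n - 2).choose (Z - 1)) ^ 2 := by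
  unfold qLStar; rw [← pow_mul, mul_comm _ 2]; ring

lemma qDeg_eq_binomialTerm (m : ℕ) :
    qDeg n Z m β = binomialTerm (n - 1) m (piStar n Z β) * (1 - β.2) ^ (n - 1).choose Z :=
  rfl

variable {β}

lemma piStar_lt_one (h₁ : β.1 < 1) (h₂ : β.2 < 1) : piStar n Z β < 1 := by
  have hx : 0 < 1 - β.1 := sub_pos.mpr h₁
  have hy : 0 < 1 - β.2 := sub_pos.mpr h₂
  have : 0 < 1 - piStar n Z β := by rw [one_sub_piStar]; positivity
  linarith

lemma qDeg_succ_div_qDeg {m : ℕ} (hm : m < n - 1) (hβ₂ : β.2 ≠ 1) (hπ : piStar n Z β ≠ 1) :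
    qDeg n Z (m + 1) β / qDeg n Z m β =
      ((n - 1).choose (m + 1) : ℝ) / (n - 1).choose m * (piStar n Z β / (1 - piStar n Z β)) := by
  have hstar : (1 - β.2) ^ (n - 1).choose Z ≠ 0 := pow_ne_zero _ (sub_ne_zero.mpr hβ₂.symm)
  rw [qDeg_eq_binomialTerm, qDeg_eq_binomialTerm, mul_div_mul_right _ _ hstar,
    binomialTerm_succ_div _ _ hm hπ]

end LinksAndStars

theorem stmt15_general (n Z d : ℕ) (hnZ : Z < n) (hd0 : 0 < d) (hdZ : d < Z) :
    Set.InjOn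
      (fun β : ℝ × ℝ => (qLStar n Z β, qDeg n Z d β / qDeg n Z (d - 1) β))
      (Set.Ico (0 : ℝ) 1 ×ˢ Set.Ico (0 : ℝ) 1) := by
  obtain ⟨m, rfl⟩ : ∃ m, d = m + 1 := ⟨d - 1, by omega⟩
  intro β hβ β' hβ' h
  obtain ⟨hqL, hratio⟩ := Prod.mk.inj h
  simp only [add_tsub_cancel_right] at hratio
  have hK : ((n - 1).choose (m + 1) : ℝ) / (n - 1).choose m ≠ 0 := by
    have := Nat.choose_pos (show m + 1 ≤ n - 1 by omega)
    have := Nat.choose_pos (show m ≤ n - 1 by omega)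
    positivity
  have hπ : piStar n Z β = piStar n Z β' := by
    have h1 := (piStar_lt_one n Z hβ.1.2 hβ.2.2).ne
    have h2 := (piStar_lt_one n Z hβ'.1.2 hβ'.2.2).ne
    rw [qDeg_succ_div_qDeg n Z (by omega) hβ.2.2.ne h1,
      qDeg_succ_div_qDeg n Z (by omega) hβ'.2.2.ne h2] at hratio
    exact div_one_sub_injOn h1 h2 (mul_left_cancel₀ hK hratio)
  have hxy := congrArg (1 - ·) hπ
  have hxy2 := congrArg (1 - ·) hqL
  simp only [one_sub_piStar, one_sub_qLStar] at hxy hxy2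
  obtain ⟨hx, hy⟩ := eq_and_eq_of_mul_eq_of_mul_sq_eq hxy hxy2
    (by rw [← one_sub_piStar]; exact (sub_pos.mpr (piStar_lt_one n Z hβ.1.2 hβ.2.2)).ne')
  have hc : (n - 2).choose (Z - 1) ≠ 0 := (Nat.choose_pos (by omega)).ne'
  have hy' := (pow_left_inj₀ (sub_nonneg.mpr hβ.2.2.le) (sub_nonneg.mpr hβ'.2.2.le) hc).mp hy
  exact Prod.ext (by linarith) (by linarith)

/-- identification of a links and `Z`-stars model.  For `n > Z ≥ 2` and
`0 < d < Z`, the map `β ↦ (q_L(β), q_d(β)/q_{d-1}(β))` is injective on `[0,1)²`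
(with the convention `0/0 = 0`, which is the Lean convention for division). -/
theorem stmt15 (n Z d : ℕ) (hZ : 2 ≤ Z) (hnZ : Z < n) (hd0 : 0 < d) (hdZ : d < Z) :
    Set.InjOn
      (fun β : ℝ × ℝ => (qLStar n Z β, qDeg n Z d β / qDeg n Z (d - 1) β))
      (Set.Ico (0 : ℝ) 1 ×ˢ Set.Ico (0 : ℝ) 1) :=
  stmt15_general n Z d hnZ hd0 hdZ
end

section
/- Identifiable uniqueness for links and triangles: fix constants 0 < D̲ < D̄ < ∞, exponents h_L > 1/2 and h_T ∈ [h_L + 1, 3h_L), and a true parameter sequence β_0^n = (b_{0,L}/n^{h_L}, b_{0,T}/n^{h_T}) with b_{0,L}, b_{0,T} ∈ [D̲, D̄]. For β = (β_L, β_T) define q_L(β) = β_L + (1−β_L)(1−(1−β_T)^{n−2}) and q_T(β) = β_T + (1−β_T)(β_L + (1−β_L)(1−(1−β_T)^{n−3}))³, and define Q̄^n(β) = n^{2h_L}(q_L(β) − q_L(β_0^n))² + n^{2h_T}(q_T(β) − q_T(β_0^n))². Let δ(x,y) = max_ℓ |x_ℓ − y_ℓ| / max(|x_ℓ|, |y_ℓ|)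 (with 0/0 = 0). Then for every ε > 0, liminf_{n→∞} of the infimum of Q̄^n(β) over all β of the form (b_L/n^{h_L}, b_T/n^{h_T}) with b_L, b_T ∈ [D̲, D̄] and δ(β, β_0^n) > ε is strictly positive. -/
/-!
Rescale `β = (b_L n^{-h_L}, b_T n^{-h_T})`. By Bernoulli's inequality,
`n^{h_L} q_L(β) = b_L + κ_n b_T + o(1)` with `κ_n = (n - 2) n^{h_L - h_T} ∈ [0, 1]`, and
`n^{h_T} q_T(β) = b_T + o(1)` since a triangle closed by three edges has probability
`O(n^{-3 h_L}) = o(n^{-h_T})`; both hold uniformly for `b_L, b_T ∈ [D̲, D̄]`. Hence `Q̄^n(β)` is,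
up to `o(1)`, the squared norm of the image of `b - b₀` under the shear `(x, y) ↦ (x + κ_n y, y)`,
which shrinks squared norms by at most a factor `3`, while `δ(β, β₀ⁿ) > ε` forces
`|b - b₀|² ≥ (ε D̲)²`.
-/

open Filter

/-- `q_L(β)`: the probability that a given edge is present in the links-and-triangles
SUGM on `n` nodes with parameters `β = (β_L, β_T)`. -/
noncomputable def qLfun (n : ℕ) (β : ℝ × ℝ) : ℝ :=
  β.1 + (1 - β.1) * (1 - (1 - β.2) ^ (n - 2))

/-- `q_T(β)`: the probability that a given triple forms a triangle in the
links-and-triangles SUGM on `n` nodes with parameters `β = (β_L, β_T)`. -/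
noncomputable def qTfun (n : ℕ) (β : ℝ × ℝ) : ℝ :=
  β.2 + (1 - β.2) * (β.1 + (1 - β.1) * (1 - (1 - β.2) ^ (n - 3))) ^ 3

/-- The population GMM objective built from the moments `(S_L, S_T)` normalized by the
rate matrix `diag(n^{h_L}, n^{h_T})`. -/
noncomputable def Qbar (n : ℕ) (hL hT : ℝ) (β0 β : ℝ × ℝ) : ℝ :=
  (n : ℝ) ^ (2 * hL) * (qLfun n β - qLfun n β0) ^ 2 +
    (n : ℝ) ^ (2 * hT) * (qTfun n β - qTfun n β0) ^ 2

/-- The relative-distance metric `δ(x,y) = max_ℓ |x_ℓ - y_ℓ| / max(|x_ℓ|, |y_ℓ|)`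
(with the convention `0/0 = 0`, which is the Lean convention for division). -/
noncomputable def relDist (x y : ℝ × ℝ) : ℝ :=
  max (|x.1 - y.1| / max |x.1| |y.1|) (|x.2 - y.2| / max |x.2| |y.2|)

open Topology

lemma one_sub_mul_le_pow {s : ℝ} (hs1 : s ≤ 2) (m : ℕ) : 1 - m * s ≤ (1 - s) ^ m := by
  simpa [sub_eq_add_neg] using one_add_mul_le_pow (a := -s) (by linarith) m

lemma one_sub_pow_le {s : ℝ} (hs0 : 0 ≤ s) (hs1 : s ≤ 1) (m : ℕ) :
    (1 - s) ^ m ≤ 1 - m * s + (m * s) ^ 2 := by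
  have hms : 0 ≤ (m : ℝ) * s := by positivity
  have hprod : (1 - s) ^ m * (1 + s) ^ m ≤ 1 := by
    rw [← mul_pow]
    exact pow_le_one₀ (by nlinarith) (by nlinarith)
  refine le_of_mul_le_mul_right (a := 1 + m * s) ?_ (by positivity)
  calc (1 - s) ^ m * (1 + m * s) ≤ (1 - s) ^ m * (1 + s) ^ m :=
        mul_le_mul_of_nonneg_left (one_add_mul_le_pow (by linarith) m)
          (pow_nonneg (by linarith) m)
    _ ≤ 1 := hprod
    _ ≤ (1 - m * s + (m * s) ^ 2) * (1 + m * s) := by nlinarith [pow_nonneg hms 3]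

-- `qLfun n β = linkOrTriangleProb (n - 2) β.1 β.2`, and `qTfun n β` contains the cube of
-- `linkOrTriangleProb (n - 3) β.1 β.2`.
def linkOrTriangleProb (m : ℕ) (t s : ℝ) : ℝ :=
  t + (1 - t) * (1 - (1 - s) ^ m)

section linkOrTriangleProb

variable {m : ℕ} {t s : ℝ}

lemma linkOrTriangleProb_nonneg (ht0 : 0 ≤ t) (ht1 : t ≤ 1) (hs0 : 0 ≤ s) (hs1 : s ≤ 1) :
    0 ≤ linkOrTriangleProb m t s := by
  have : (1 - s) ^ m ≤ 1 := pow_le_one₀ (by linarith) (by linarith)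
  unfold linkOrTriangleProb
  nlinarith

lemma linkOrTriangleProb_le (ht0 : 0 ≤ t) (hs0 : 0 ≤ s) (hs1 : s ≤ 1) :
    linkOrTriangleProb m t s ≤ t + m * s := by
  have hlow := one_sub_mul_le_pow (by linarith) m (s := s)
  have hpow : (1 - s) ^ m ≤ 1 := pow_le_one₀ (by linarith) (by linarith)
  unfold linkOrTriangleProb
  nlinarith [mul_nonneg ht0 (sub_nonneg.2 hpow)]

lemma abs_linkOrTriangleProb_sub_le (ht0 : 0 ≤ t) (hs0 : 0 ≤ s) (hs1 : s ≤ 1) :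
    |linkOrTriangleProb m t s - (t + m * s)| ≤ m * t * s + (m * s) ^ 2 := by
  have hlow := one_sub_mul_le_pow (by linarith) m (s := s)
  have hup := one_sub_pow_le hs0 hs1 m
  have hpow : (1 - s) ^ m ≤ 1 := pow_le_one₀ (by linarith) (by linarith)
  unfold linkOrTriangleProb
  rw [abs_le]
  constructor <;> nlinarith [mul_nonneg ht0 (sub_nonneg.2 hpow), mul_nonneg ht0 (sub_nonneg.2 hlow)]

end linkOrTriangleProb

noncomputable def edgeTriangleWeight (n : ℕ) (hL hT : ℝ) : ℝ :=
  ((n - 2 : ℕ) : ℝ) * (n : ℝ) ^ hL / (n : ℝ) ^ hT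

lemma rpow_mul_div_rpow_le_one {x a b : ℝ} (hx : 1 ≤ x) (hab : a + 1 ≤ b) :
    x ^ a * (x / x ^ b) ≤ 1 := by
  rw [mul_div_assoc', div_le_one (Real.rpow_pos_of_pos (by linarith) b),
    ← Real.rpow_add_one (by positivity)]
  exact Real.rpow_le_rpow_of_exponent_le hx hab

section rescaled

variable {n : ℕ} {hL hT D bL bT : ℝ}

lemma edgeTriangleWeight_nonneg : 0 ≤ edgeTriangleWeight n hL hT := by
  unfold edgeTriangleWeight
  positivity

lemma edgeTriangleWeight_le_one (hn : 1 ≤ (n : ℝ)) (hLT : hL + 1 ≤ hT) :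
    edgeTriangleWeight n hL hT ≤ 1 := by
  have hm : ((n - 2 : ℕ) : ℝ) ≤ n := by exact_mod_cast Nat.sub_le n 2
  calc edgeTriangleWeight n hL hT ≤ (n : ℝ) * (n : ℝ) ^ hL / (n : ℝ) ^ hT := by
        unfold edgeTriangleWeight; gcongr
    _ = (n : ℝ) ^ hL * (n / (n : ℝ) ^ hT) := by ring
    _ ≤ 1 := rpow_mul_div_rpow_le_one hn hLT

lemma natCast_mul_div_rpow_le {m : ℕ} (hm : m ≤ n) (hbT0 : 0 ≤ bT) (hbT : bT ≤ D) :
    (m : ℝ) * (bT / (n : ℝ) ^ hT) ≤ D * (n / (n : ℝ) ^ hT) := by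
  rw [mul_div_assoc', mul_div_assoc', mul_comm D]
  gcongr

lemma abs_rpow_mul_qLfun_sub_le (hn : 1 ≤ (n : ℝ)) (hLT : hL + 1 ≤ hT)
    (hbL0 : 0 ≤ bL) (hbL : bL ≤ D) (hbT0 : 0 ≤ bT) (hbT : bT ≤ D) (hD : D ≤ (n : ℝ) ^ hL) :
    |(n : ℝ) ^ hL * qLfun n (bL / (n : ℝ) ^ hL, bT / (n : ℝ) ^ hT)
        - (bL + edgeTriangleWeight n hL hT * bT)| ≤ 2 * D ^ 2 * (n / (n : ℝ) ^ hT) := by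
  have hlin : (n : ℝ) ^ hL * (bL / (n : ℝ) ^ hL + ((n - 2 : ℕ) : ℝ) * (bT / (n : ℝ) ^ hT))
      = bL + edgeTriangleWeight n hL hT * bT := by
    have : (0 : ℝ) < (n : ℝ) ^ hL := Real.rpow_pos_of_pos (by linarith) hL
    unfold edgeTriangleWeight; field_simp
  set N : ℝ := (n : ℝ)
  set m : ℕ := n - 2
  set ρ := N / N ^ hT
  have hNL : 0 < N ^ hL := Real.rpow_pos_of_pos (by linarith) hL
  have hNLT : N ^ hL ≤ N ^ hT := Real.rpow_le_rpow_of_exponent_le hn (by linarith)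
  have hρ : N ^ hL * ρ ≤ 1 := rpow_mul_div_rpow_le_one hn hLT
  have hms : m * (bT / N ^ hT) ≤ D * ρ := natCast_mul_div_rpow_le (Nat.sub_le n 2) hbT0 hbT
  have happrox := abs_linkOrTriangleProb_sub_le (m := m) (div_nonneg hbL0 hNL.le)
    (div_nonneg hbT0 (hNL.trans_le hNLT).le)
    ((div_le_one (hNL.trans_le hNLT)).2 (hbT.trans (hD.trans hNLT)))
  have hD0 : 0 ≤ D := hbL0.trans hbL
  have hms0 : 0 ≤ m * (bT / N ^ hT) := by positivity
  rw [← hlin, ← mul_sub, abs_mul, abs_of_pos hNL]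
  calc N ^ hL * |qLfun n (bL / N ^ hL, bT / N ^ hT) - (bL / N ^ hL + m * (bT / N ^ hT))|
      ≤ N ^ hL * (m * (bL / N ^ hL) * (bT / N ^ hT) + (m * (bT / N ^ hT)) ^ 2) := by
        gcongr; exact happrox
    _ = bL * (m * (bT / N ^ hT)) + N ^ hL * (m * (bT / N ^ hT)) * (m * (bT / N ^ hT)) := by
        field_simp
    _ ≤ D * (D * ρ) + N ^ hL * (D * ρ) * (D * ρ) := by gcongr
    _ = D ^ 2 * ρ * (1 + N ^ hL * ρ) := by ring
    _ ≤ D ^ 2 * ρ * 2 := by gcongr; linarith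
    _ = 2 * D ^ 2 * ρ := by ring

lemma abs_rpow_mul_qTfun_sub_le (hn : 1 ≤ (n : ℝ)) (hLT : hL + 1 ≤ hT)
    (hbL0 : 0 ≤ bL) (hbL : bL ≤ D) (hbT0 : 0 ≤ bT) (hbT : bT ≤ D) (hD : D ≤ (n : ℝ) ^ hL) :
    |(n : ℝ) ^ hT * qTfun n (bL / (n : ℝ) ^ hL, bT / (n : ℝ) ^ hT) - bT|
      ≤ 8 * D ^ 3 * ((n : ℝ) ^ hT / ((n : ℝ) ^ hL) ^ 3) := by
  set N : ℝ := (n : ℝ)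
  set t := bL / N ^ hL
  set s := bT / N ^ hT
  set P := linkOrTriangleProb (n - 3) t s
  have hNL : 0 < N ^ hL := Real.rpow_pos_of_pos (by linarith) hL
  have hNLT : N ^ hL ≤ N ^ hT := Real.rpow_le_rpow_of_exponent_le hn (by linarith)
  have hNT : 0 < N ^ hT := hNL.trans_le hNLT
  have hs1 : s ≤ 1 := (div_le_one hNT).2 (hbT.trans (hD.trans hNLT))
  have hP0 : 0 ≤ P := linkOrTriangleProb_nonneg (div_nonneg hbL0 hNL.le)
    ((div_le_one hNL).2 (hbL.trans hD)) (div_nonneg hbT0 hNT.le) hs1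
  have hP : P ≤ 2 * D / N ^ hL := by
    have hρ : N / N ^ hT ≤ 1 / N ^ hL :=
      (le_div_iff₀' hNL).2 (rpow_mul_div_rpow_le_one hn hLT)
    have hms : ((n - 3 : ℕ) : ℝ) * s ≤ D * (N / N ^ hT) :=
      natCast_mul_div_rpow_le (Nat.sub_le n 3) hbT0 hbT
    calc P ≤ t + (n - 3 : ℕ) * s := linkOrTriangleProb_le (div_nonneg hbL0 hNL.le)
          (div_nonneg hbT0 hNT.le) hs1
      _ ≤ D / N ^ hL + D * (1 / N ^ hL) := by
          have hD0 : 0 ≤ D := hbT0.trans hbT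
          exact add_le_add (div_le_div_of_nonneg_right hbL hNL.le) (hms.trans (by gcongr))
      _ = 2 * D / N ^ hL := by ring
  have hdiff : N ^ hT * qTfun n (t, s) - bT = N ^ hT * ((1 - s) * P ^ 3) := by
    change N ^ hT * (s + (1 - s) * P ^ 3) - bT = _
    rw [mul_add, mul_div_cancel₀ bT hNT.ne']
    ring
  have hs0 : 0 ≤ 1 - s := sub_nonneg.2 hs1
  rw [hdiff, abs_of_nonneg (by positivity)]
  calc N ^ hT * ((1 - s) * P ^ 3) ≤ N ^ hT * (1 * (2 * D / N ^ hL) ^ 3) := by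
        gcongr
        linarith [div_nonneg hbT0 hNT.le]
    _ = 8 * D ^ 3 * (N ^ hT / (N ^ hL) ^ 3) := by ring

end rescaled

lemma tendsto_natCast_rpow_div_rpow {a b : ℝ} (hab : a < b) :
    Tendsto (fun n : ℕ => (n : ℝ) ^ a / (n : ℝ) ^ b) atTop (𝓝 0) :=
  ((tendsto_rpow_neg_atTop (sub_pos.2 hab)).comp tendsto_natCast_atTop_atTop).congr fun n => by
    simp only [Function.comp, neg_sub]
    exact Real.rpow_sub' (Nat.cast_nonneg n) (sub_ne_zero.2 hab.ne)

lemma eventually_const_mul_le_of_tendsto {f : ℕ → ℝ} (hf : Tendsto f atTop (𝓝 0)) (C : ℝ)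
    {η : ℝ} (hη : 0 < η) : ∀ᶠ n in atTop, C * f n ≤ η := by
  have hC := hf.const_mul C
  rw [mul_zero] at hC
  exact hC.eventually_le_const hη

lemma eventually_abs_rpow_mul_q_sub_le {hL hT : ℝ} (hL0 : 0 < hL) (hLT : hL + 1 ≤ hT)
    (hT3 : hT < 3 * hL) (D : ℝ) {η : ℝ} (hη : 0 < η) :
    ∀ᶠ n : ℕ in atTop, ∀ bL ∈ Set.Icc 0 D, ∀ bT ∈ Set.Icc 0 D,
      |(n : ℝ) ^ hL * qLfun n (bL / (n : ℝ) ^ hL, bT / (n : ℝ) ^ hT)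
          - (bL + edgeTriangleWeight n hL hT * bT)| ≤ η ∧
      |(n : ℝ) ^ hT * qTfun n (bL / (n : ℝ) ^ hL, bT / (n : ℝ) ^ hT) - bT| ≤ η := by
  have hlink : Tendsto (fun n : ℕ => (n : ℝ) / (n : ℝ) ^ hT) atTop (𝓝 0) := by
    simpa using tendsto_natCast_rpow_div_rpow (a := 1) (b := hT) (by linarith)
  have htri : Tendsto (fun n : ℕ => (n : ℝ) ^ hT / ((n : ℝ) ^ hL) ^ 3) atTop (𝓝 0) :=
    (tendsto_natCast_rpow_div_rpow (a := hT) (b := hL * 3) (by linarith)).congr fun n => by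
      rw [← Real.rpow_mul_natCast (Nat.cast_nonneg n)]
      norm_num
  filter_upwards [eventually_ge_atTop 1,
    ((tendsto_rpow_atTop hL0).comp tendsto_natCast_atTop_atTop).eventually_ge_atTop D,
    eventually_const_mul_le_of_tendsto hlink (2 * D ^ 2) hη,
    eventually_const_mul_le_of_tendsto htri (8 * D ^ 3) hη] with n hn hD hηL hηT
  intro bL ⟨hbL0, hbL⟩ bT ⟨hbT0, hbT⟩
  have hn' : 1 ≤ (n : ℝ) := by exact_mod_cast hn
  exact ⟨(abs_rpow_mul_qLfun_sub_le hn' hLT hbL0 hbL hbT0 hbT hD).trans hηL,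
    (abs_rpow_mul_qTfun_sub_le hn' hLT hbL0 hbL hbT0 hbT hD).trans hηT⟩

lemma relDist_div_div (a₁ a₂ b₁ b₂ : ℝ) {p q : ℝ} (hp : 0 < p) (hq : 0 < q) :
    relDist (a₁ / p, a₂ / q) (b₁ / p, b₂ / q) = relDist (a₁, a₂) (b₁, b₂) := by
  have key : ∀ a b c : ℝ, 0 < c →
      |a / c - b / c| / max |a / c| |b / c| = |a - b| / max |a| |b| := fun a b c hc => by
    rw [← sub_div, abs_div, abs_div, abs_div, abs_of_pos hc, max_div_div_right hc.le,
      div_div_div_cancel_right₀ hc.ne']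
  simp only [relDist, key _ _ _ hp, key _ _ _ hq]

lemma sq_mul_le_of_lt_relDist {a₁ a₂ b₁ b₂ ε D : ℝ} (hε : 0 ≤ ε) (hD : 0 < D)
    (ha₁ : D ≤ a₁) (ha₂ : D ≤ a₂) (hb₁ : D ≤ b₁) (hb₂ : D ≤ b₂)
    (h : ε < relDist (a₁, a₂) (b₁, b₂)) : (ε * D) ^ 2 ≤ (a₁ - b₁) ^ 2 + (a₂ - b₂) ^ 2 := by
  have key : ∀ a b : ℝ, D ≤ a → D ≤ b → ε < |a - b| / max |a| |b| → (ε * D) ^ 2 ≤ (a - b) ^ 2 := by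
    intro a b ha hb hab
    have hM : D ≤ max |a| |b| := le_max_of_le_left (ha.trans (le_abs_self a))
    rw [lt_div_iff₀ (hD.trans_le hM)] at hab
    rw [← sq_abs (a - b)]
    have : ε * D ≤ |a - b| := (mul_le_mul_of_nonneg_left hM hε).trans hab.le
    exact pow_le_pow_left₀ (by positivity) this 2
  rcases lt_max_iff.1 h with h₁ | h₂
  · linarith [key a₁ b₁ ha₁ hb₁ h₁, sq_nonneg (a₂ - b₂)]
  · linarith [key a₂ b₂ ha₂ hb₂ h₂, sq_nonneg (a₁ - b₁)]

lemma Qbar_eq (n : ℕ) (hL hT : ℝ) (β₀ β : ℝ × ℝ) :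
    Qbar n hL hT β₀ β = ((n : ℝ) ^ hL * (qLfun n β - qLfun n β₀)) ^ 2
      + ((n : ℝ) ^ hT * (qTfun n β - qTfun n β₀)) ^ 2 := by
  have h2 : ∀ h : ℝ, (n : ℝ) ^ (2 * h) = ((n : ℝ) ^ h) ^ 2 := fun h => by
    rw [mul_comm]
    exact_mod_cast Real.rpow_mul_natCast (Nat.cast_nonneg n) h 2
  simp only [Qbar, h2, mul_pow]

lemma sq_add_sq_le_three_mul (x y : ℝ) {κ : ℝ} (hκ0 : 0 ≤ κ) (hκ1 : κ ≤ 1) :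
    x ^ 2 + y ^ 2 ≤ 3 * ((x + κ * y) ^ 2 + y ^ 2) := by
  nlinarith [sq_nonneg (2 * x + 3 * κ * y), mul_nonneg (mul_nonneg (sub_nonneg.2 hκ1)
    (by linarith : (0 : ℝ) ≤ 1 + κ)) (sq_nonneg y)]

lemma sq_add_sq_le_of_abs_sub_le {x y κ a b η : ℝ} (hκ0 : 0 ≤ κ) (hκ1 : κ ≤ 1)
    (ha : |a - (x + κ * y)| ≤ η) (hb : |b - y| ≤ η) :
    x ^ 2 + y ^ 2 ≤ 6 * (a ^ 2 + b ^ 2) + 12 * η ^ 2 := by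
  have hsq : ∀ u v : ℝ, |u - v| ≤ η → v ^ 2 ≤ 2 * u ^ 2 + 2 * η ^ 2 := fun u v h => by
    have : (u - v) ^ 2 ≤ η ^ 2 := sq_le_sq' (abs_le.1 h).1 (abs_le.1 h).2
    nlinarith [sq_nonneg (u + (u - v))]
  linarith [sq_add_sq_le_three_mul x y hκ0 hκ1, hsq a _ ha, hsq b _ hb]

lemma abs_mul_sub_sub_le {c p p₀ u u₀ η : ℝ} (h : |c * p - u| ≤ η) (h₀ : |c * p₀ - u₀| ≤ η) :
    |c * (p - p₀) - (u - u₀)| ≤ 2 * η := by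
  rw [show c * (p - p₀) - (u - u₀) = (c * p - u) - (c * p₀ - u₀) by ring]
  linarith [abs_sub (c * p - u) (c * p₀ - u₀)]

theorem stmt19_general (Dlo Dhi hL hT : ℝ) (hDlo : 0 < Dlo)
    (hhT1 : hL + 1 ≤ hT) (hhT2 : hT < 3 * hL)
    (b0L b0T : ℝ) (hb0L : b0L ∈ Set.Icc Dlo Dhi) (hb0T : b0T ∈ Set.Icc Dlo Dhi)
    (ε : ℝ) (hε : 0 < ε) :
    ∃ c > (0 : ℝ), ∀ᶠ n : ℕ in atTop,
      ∀ bL ∈ Set.Icc Dlo Dhi, ∀ bT ∈ Set.Icc Dlo Dhi,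
        relDist (bL / (n : ℝ) ^ hL, bT / (n : ℝ) ^ hT)
            (b0L / (n : ℝ) ^ hL, b0T / (n : ℝ) ^ hT) > ε →
          c ≤ Qbar n hL hT (b0L / (n : ℝ) ^ hL, b0T / (n : ℝ) ^ hT)
              (bL / (n : ℝ) ^ hL, bT / (n : ℝ) ^ hT) := by
  have hL0 : 0 < hL := by linarith
  set r := ε * Dlo
  have hIcc : ∀ b ∈ Set.Icc Dlo Dhi, b ∈ Set.Icc 0 Dhi := fun b hb => ⟨hDlo.le.trans hb.1, hb.2⟩
  refine ⟨r ^ 2 / 9, by positivity, ?_⟩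
  filter_upwards [eventually_abs_rpow_mul_q_sub_le hL0 hhT1 hhT2 Dhi (by positivity : 0 < r / 12),
    eventually_ge_atTop 1] with n happrox hn
  intro bL hbL bT hbT hrel
  have hn' : (0 : ℝ) < n := by exact_mod_cast hn
  rw [relDist_div_div _ _ _ _ (Real.rpow_pos_of_pos hn' hL) (Real.rpow_pos_of_pos hn' hT)] at hrel
  have hsep := sq_mul_le_of_lt_relDist hε.le hDlo hbL.1 hbT.1 hb0L.1 hb0T.1 hrel
  obtain ⟨hL₁, hT₁⟩ := happrox bL (hIcc bL hbL) bT (hIcc bT hbT)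
  obtain ⟨hL₀, hT₀⟩ := happrox b0L (hIcc b0L hb0L) b0T (hIcc b0T hb0T)
  have hbound := sq_add_sq_le_of_abs_sub_le (x := bL - b0L) (y := bT - b0T)
    edgeTriangleWeight_nonneg (edgeTriangleWeight_le_one (by exact_mod_cast hn) hhT1)
    (by convert abs_mul_sub_sub_le hL₁ hL₀ using 3; ring) (abs_mul_sub_sub_le hT₁ hT₀)
  have hr : 12 * (2 * (r / 12)) ^ 2 = r ^ 2 / 3 := by ring
  rw [Qbar_eq]
  linarith

/-- identifiable uniqueness for links and triangles.  With
`β_0^n = (b_{0,L}/n^{h_L}, b_{0,T}/n^{h_T})`, `b_{0,L}, b_{0,T} ∈ [D̲, D̄]`, `h_L > 1/2`,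
`h_T ∈ [h_L + 1, 3 h_L)`, and every `ε > 0`: the liminf over `n` of the infimum of
`Q̄^n(β)` over admissible `β = (b_L/n^{h_L}, b_T/n^{h_T})` with `b_L, b_T ∈ [D̲, D̄]` and
`δ(β, β_0^n) > ε` is strictly positive, i.e. there is a `c > 0` below every such value
for all large `n`. -/
theorem stmt19 (Dlo Dhi hL hT : ℝ) (hDlo : 0 < Dlo) (hD : Dlo < Dhi)
    (hhL : 1 / 2 < hL) (hhT1 : hL + 1 ≤ hT) (hhT2 : hT < 3 * hL)
    (b0L b0T : ℝ) (hb0L : b0L ∈ Set.Icc Dlo Dhi) (hb0T : b0T ∈ Set.Icc Dlo Dhi)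
    (ε : ℝ) (hε : 0 < ε) :
    ∃ c > (0 : ℝ), ∀ᶠ n : ℕ in atTop,
      ∀ bL ∈ Set.Icc Dlo Dhi, ∀ bT ∈ Set.Icc Dlo Dhi,
        relDist (bL / (n : ℝ) ^ hL, bT / (n : ℝ) ^ hT)
            (b0L / (n : ℝ) ^ hL, b0T / (n : ℝ) ^ hT) > ε →
          c ≤ Qbar n hL hT (b0L / (n : ℝ) ^ hL, b0T / (n : ℝ) ^ hT)
              (bL / (n : ℝ) ^ hL, bT / (n : ℝ) ^ hT) :=
  stmt19_general Dlo Dhi hL hT hDlo hhT1 hhT2 b0L b0T hb0L hb0T ε hε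
end
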